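/- Under the optimal resampling scheme (deterministic keeping of weights above $1/C$ plus stratified resampling of the rest), no particle is duplicated: the set of surviving particles is a subset of the original distinct particles, each appearing at most once. -/

import Mathlib

/-! The residual particles `i` (those with `W i ≤ 1 / C`) occupy consecutive intervals
`(S i, S i + C * W i]`, `S i` being the mass of the residual particles before `i`; they tile
`(0, n]`, where `n = N - #K` is the number of strata left after keeping the `#K` heavy particles.
For `u ∈ (0, 1]` each stratum point `u + k`, `k < n`, lies in exactly one interval, and since
`C * W i ≤ 1` no interval contains two of them. Double counting these incidences shows that
exactly `n` residual particles are selected. -/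

open MeasureTheory Finset

theorem eq_of_add_intCast_mem_Ioc {u x a : ℝ} (ha : a ≤ 1) {k k' : ℤ}
    (hk : u + k ∈ Set.Ioc x (x + a)) (hk' : u + k' ∈ Set.Ioc x (x + a)) : k = k' := by
  have h1 : (k : ℝ) < k' + 1 := by linarith [hk.2, hk'.1]
  have h2 : (k' : ℝ) < k + 1 := by linarith [hk.1, hk'.2]
  exact_mod_cast le_antisymm (Int.lt_add_one_iff.1 (by exact_mod_cast h1))
    (Int.lt_add_one_iff.1 (by exact_mod_cast h2))

section PrefixSum

variable {ι : Type*} [LinearOrder ι]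

def prefixSum (s : Finset ι) (a : ι → ℝ) (i : ι) : ℝ := ∑ j ∈ s with j < i, a j

abbrev prefixIoc (s : Finset ι) (a : ι → ℝ) (i : ι) : Set ℝ :=
  Set.Ioc (prefixSum s a i) (prefixSum s a i + a i)

variable {s : Finset ι} {a : ι → ℝ}

theorem prefixSum_insert_of_not_lt {m i : ι} (h : ¬m < i) :
    prefixSum (insert m s) a i = prefixSum s a i := by
  simp only [prefixSum, filter_insert, h, if_false]

theorem prefixSum_insert_max {m : ι} (hs : ∀ x ∈ s, x < m) :
    prefixSum (insert m s) a m = ∑ j ∈ s, a j := by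
  rw [prefixSum, filter_insert, if_neg (lt_irrefl m), filter_true_of_mem hs]

theorem prefixSum_add_le_of_lt (ha : ∀ j ∈ s, 0 ≤ a j) {i i' : ι} (hi : i ∈ s) (hii' : i < i') :
    prefixSum s a i + a i ≤ prefixSum s a i' := by
  have hnot : i ∉ {j ∈ s | j < i} := by simp
  rw [prefixSum, add_comm, ← sum_insert hnot]
  refine sum_le_sum_of_subset_of_nonneg ?_ fun j hj _ => ha j (mem_filter.1 hj).1
  intro j hj
  simp only [mem_insert, mem_filter] at hj ⊢
  rcases hj with rfl | ⟨hj, hji⟩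
  exacts [⟨hi, hii'⟩, ⟨hj, hji.trans hii'⟩]

theorem exists_mem_prefixIoc {t : ℝ} (ht : t ∈ Set.Ioc 0 (∑ i ∈ s, a i)) :
    ∃ i ∈ s, t ∈ prefixIoc s a i := by
  induction s using Finset.induction_on_max with
  | empty => simp at ht
  | insert m s hs ih =>
    have hm : m ∉ s := fun h => lt_irrefl m (hs m h)
    rw [sum_insert hm] at ht
    by_cases hts : t ≤ ∑ i ∈ s, a i
    · obtain ⟨i, hi, hti⟩ := ih ⟨ht.1, hts⟩
      refine ⟨i, mem_insert_of_mem hi, ?_⟩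
      rwa [prefixIoc, prefixSum_insert_of_not_lt (hs i hi).not_gt]
    · refine ⟨m, mem_insert_self m s, ?_⟩
      rw [prefixIoc, prefixSum_insert_max hs]
      constructor <;> linarith [ht.2]

theorem eq_of_mem_prefixIoc (ha : ∀ j ∈ s, 0 ≤ a j) {i i' : ι} (hi : i ∈ s) (hi' : i' ∈ s)
    {t : ℝ} (ht : t ∈ prefixIoc s a i) (ht' : t ∈ prefixIoc s a i') : i = i' := by
  by_contra hne
  rcases lt_or_gt_of_ne hne with h | h
  · linarith [prefixSum_add_le_of_lt ha hi h, ht.2, ht'.1]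
  · linarith [prefixSum_add_le_of_lt ha hi' h, ht.1, ht'.2]

theorem card_filter_exists_add_mem_prefixIoc {n : ℕ} (ha : ∀ i ∈ s, 0 ≤ a i)
    (ha1 : ∀ i ∈ s, a i ≤ 1) (hsum : ∑ i ∈ s, a i = n) {u : ℝ} (hu : u ∈ Set.Ioc 0 1) :
    #{i ∈ s | ∃ k ∈ range n, u + k ∈ prefixIoc s a i} = n := by
  have hk_unique : ∀ i ∈ s, ∀ k k' : ℕ, u + k ∈ prefixIoc s a i → u + k' ∈ prefixIoc s a i →
      k = k' := fun i hi k k' hk hk' =>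
    Int.natCast_inj.1 <|
      eq_of_add_intCast_mem_Ioc (ha1 i hi) (by simpa using hk) (by simpa using hk')
  have hi_exists : ∀ k ∈ range n, ∃ i ∈ s, u + k ∈ prefixIoc s a i := fun k hk => by
    refine exists_mem_prefixIoc ⟨add_pos_of_pos_of_nonneg hu.1 k.cast_nonneg, ?_⟩
    have : (k : ℝ) + 1 ≤ n := by exact_mod_cast mem_range.1 hk
    linarith [hu.2]
  calc _ = _ * 1 := (mul_one _).symm
    _ = #(range n) * 1 := card_mul_eq_card_mul (fun i (k : ℕ) => u + k ∈ prefixIoc s a i) ?_ ?_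
    _ = n := by rw [mul_one, card_range]
  · intro i hi
    obtain ⟨hi, k, hk, hik⟩ := mem_filter.1 hi
    refine card_eq_one.2 ⟨k, eq_singleton_iff_unique_mem.2 ⟨(mem_bipartiteAbove _).2 ⟨hk, hik⟩, ?_⟩⟩
    exact fun k' hk' => hk_unique i hi k' k ((mem_bipartiteAbove _).1 hk').2 hik
  · intro k hk
    obtain ⟨i, hi, hik⟩ := hi_exists k hk
    refine card_eq_one.2 ⟨i, eq_singleton_iff_unique_mem.2
      ⟨(mem_bipartiteBelow _).2 ⟨mem_filter.2 ⟨hi, k, hk, hik⟩, hik⟩, ?_⟩⟩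
    intro i' hi'
    obtain ⟨hi's, hi'k⟩ := (mem_bipartiteBelow _).1 hi'
    exact eq_of_mem_prefixIoc ha (mem_filter.1 hi's).1 hi hi'k hik

end PrefixSum

theorem optimal_resampling_no_duplicates_general
    (M N : ℕ)
    (W : Fin M → ℝ) (hpos : ∀ i, 0 < W i)
    (C : ℝ) (hC : 0 < C) (heq : ∑ i, min 1 (C * W i) = (N : ℝ)) :
    ∀ᵐ u ∂(volume.restrict (Set.Icc (0 : ℝ) 1)),
      Nat.card ({i : Fin M | 1 / C < W i} ∪
        {i : Fin M | W i ≤ 1 / C ∧ ∃ k ∈ Finset.range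
            (N - (Finset.univ.filter fun i : Fin M => 1 / C < W i).card),
          (∑ j ∈ (Finset.univ.filter fun j : Fin M => W j ≤ 1 / C).filter
              fun j => j < i, C * W j) < u + k ∧
          u + k ≤ (∑ j ∈ (Finset.univ.filter fun j : Fin M => W j ≤ 1 / C).filter
              fun j => j < i, C * W j) + C * W i} : Set (Fin M)) = N := by
  set K : Finset (Fin M) := {i | 1 / C < W i}
  set R : Finset (Fin M) := {i | W i ≤ 1 / C}
  have hCW_le : ∀ i ∈ R, C * W i ≤ 1 := fun i hi => (le_div_iff₀' hC).1 (mem_filter.1 hi).2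
  have hCW_nonneg : ∀ i ∈ R, 0 ≤ C * W i := fun i _ => (mul_pos hC (hpos i)).le
  have hKR : Disjoint K R := disjoint_filter.2 fun i _ h h' => h'.not_gt h
  have hsplit : (#K : ℝ) + ∑ i ∈ R, C * W i = N := by
    rw [← heq, ← sum_filter_add_sum_filter_not univ (fun i => 1 / C < W i)]
    simp only [not_lt]
    congr 1
    · rw [sum_congr rfl fun i hi => min_eq_left ((div_lt_iff₀' hC).1 (mem_filter.1 hi).2).le,
        sum_const, nsmul_one]
    · exact sum_congr rfl fun i hi => (min_eq_right (hCW_le i hi)).symm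
  have hKN : #K ≤ N := by
    exact_mod_cast (le_add_of_nonneg_right (sum_nonneg hCW_nonneg)).trans_eq hsplit
  -- At `u = 0` the stratum point `0` lies in no `prefixIoc`, so the count holds only a.e.
  rw [← Measure.restrict_congr_set Ioc_ae_eq_Icc]
  filter_upwards [ae_restrict_mem measurableSet_Ioc] with u hu
  have hsel := card_filter_exists_add_mem_prefixIoc (n := N - #K) hCW_nonneg hCW_le
    (by push_cast [hKN]; linarith) hu
  rw [Nat.card_eq_card_toFinset, Set.toFinset_union, Set.toFinset_ofPred, Set.toFinset_ofPred,
    filter_and, inter_filter, inter_univ,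
    card_union_of_disjoint (hKR.mono_right (filter_subset _ R))]
  convert (by omega : #K + (N - #K) = N) using 2
  exact hsel

/-- The optimal resampling scheme of the discrete particle filter — keeping
deterministically the `L` particles with weight strictly above `1/C` and
choosing the remaining survivors by stratified resampling among the residual
particles with inclusion probabilities `C * W i` — produces, almost surely in
the uniform variable `u`, a duplicate-free set of survivors (a subset of the
original index set, each particle appearing at most once) of size exactly `N`. -/
theorem optimal_resampling_no_duplicates
    (M N : ℕ) (hN : 0 < N) (hNM : N < M)
    (W : Fin M → ℝ) (hpos : ∀ i, 0 < W i) (hsum : ∑ i, W i = 1)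
    (C : ℝ) (hC : 0 < C) (heq : ∑ i, min 1 (C * W i) = (N : ℝ)) :
    ∀ᵐ u ∂(volume.restrict (Set.Icc (0 : ℝ) 1)),
      Nat.card ({i : Fin M | 1 / C < W i} ∪
        {i : Fin M | W i ≤ 1 / C ∧ ∃ k ∈ Finset.range
            (N - (Finset.univ.filter fun i : Fin M => 1 / C < W i).card),
          (∑ j ∈ (Finset.univ.filter fun j : Fin M => W j ≤ 1 / C).filter
              fun j => j < i, C * W j) < u + k ∧
          u + k ≤ (∑ j ∈ (Finset.univ.filter fun j : Fin M => W j ≤ 1 / C).filter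
              fun j => j < i, C * W j) + C * W i} : Set (Fin M)) = N :=
  optimal_resampling_no_duplicates_general M N W hpos C hC heq
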